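/- If Θ is antiunitary with Θ² = -Id and commutes with a self-adjoint operator H on a nonzero finite-dimensional complex inner product space, then every eigenspace of H has even dimension. -/

import Mathlib

open Module

/-- Auxiliary lemma: any `Θ`-invariant subspace has even dimension. -/
theorem even_finrank_of_theta_invariant
    {V : Type*} [NormedAddCommGroup V] [InnerProductSpace ℂ V] [FiniteDimensional ℂ V]
    (Θ : V → V)
    (hadd : ∀ u v : V, Θ (u + v) = Θ u + Θ v)
    (hconj : ∀ (c : ℂ) (v : V), Θ (c • v) = (starRingEnd ℂ c) • Θ v)
    (hinner : ∀ u v : V, (inner ℂ (Θ u) (Θ v) : ℂ) = (inner ℂ v u : ℂ))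
    (hsq : ∀ v : V, Θ (Θ v) = -v) :
    ∀ n : ℕ, ∀ W : Submodule ℂ V, (∀ v ∈ W, Θ v ∈ W) → finrank ℂ W = n → Even n := by
  have hzero : Θ 0 = 0 := by
    have := hadd 0 0
    simp only [add_zero] at this
    exact (left_eq_add.mp this)
  have hne : ∀ v : V, v ≠ 0 → Θ v ≠ 0 := by
    intro v hv h
    apply hv
    have := hsq v
    rw [h, hzero] at this
    simpa using this.symm
  have horth : ∀ v : V, (inner ℂ v (Θ v) : ℂ) = 0 := by
    intro v
    have h1 := hinner (Θ v) v
    rw [hsq v] at h1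
    rw [inner_neg_left] at h1
    have h2 : (2 : ℂ) * inner ℂ v (Θ v) = 0 := by linear_combination -h1
    simpa using h2
  intro n
  induction n using Nat.strong_induction_on with
  | _ n ih =>
    intro W hW hrank
    rcases Nat.eq_zero_or_pos n with h0 | hpos
    · exact h0 ▸ Even.zero
    · -- pick a nonzero vector in W
      have : finrank ℂ W ≠ 0 := by omega
      obtain ⟨v, hvW, hv0⟩ : ∃ v ∈ W, v ≠ 0 := by
        by_contra hc
        push_neg at hc
        have : W = ⊥ := by
          ext x
          simp only [Submodule.mem_bot]
          exact ⟨fun hx => hc x hx, fun hx => hx ▸ W.zero_mem⟩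
        rw [this, finrank_bot] at hrank
        omega
      -- v and Θ v are linearly independent
      have hThvW : Θ v ∈ W := hW v hvW
      have hli : LinearIndependent ℂ ![v, Θ v] := by
        rw [LinearIndependent.pair_iff]
        intro s t hst
        have h1 : (inner ℂ v (s • v + t • Θ v) : ℂ) = 0 := by rw [hst, inner_zero_right]
        rw [inner_add_right, inner_smul_right, inner_smul_right, horth v, mul_zero,
          add_zero] at h1
        have hs : s = 0 := by
          rcases mul_eq_zero.mp h1 with h | h
          · exact h
          · exact absurd (inner_self_eq_zero.mp h) hv0
        refine ⟨hs, ?_⟩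
        rw [hs, zero_smul, zero_add] at hst
        rcases smul_eq_zero.mp hst with h | h
        · exact h
        · exact absurd h (hne v hv0)
      set U : Submodule ℂ V := Submodule.span ℂ (Set.range ![v, Θ v]) with hU
      have hUrank : finrank ℂ U = 2 := by
        rw [hU, finrank_span_eq_card hli]
        simp
      have hUle : U ≤ W := by
        rw [hU, Submodule.span_le]
        rintro x ⟨i, rfl⟩
        fin_cases i
        · exact hvW
        · exact hThvW
      -- U is Θ-invariant
      have hUinv : ∀ u ∈ U, Θ u ∈ U := by
        have hvU : v ∈ U := Submodule.subset_span ⟨0, rfl⟩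
        have hTvU : Θ v ∈ U := Submodule.subset_span ⟨1, rfl⟩
        intro u hu
        induction hu using Submodule.span_induction with
        | mem x hx =>
          obtain ⟨i, rfl⟩ := hx
          fin_cases i
          · exact hTvU
          · simpa [hsq v] using U.neg_mem hvU
        | zero => simpa [hzero] using U.zero_mem
        | add x y _ _ hx hy => rw [hadd]; exact U.add_mem hx hy
        | smul c x _ hx => rw [hconj]; exact U.smul_mem _ hx
      -- the orthogonal complement within W is Θ-invariant
      set W' : Submodule ℂ V := Uᗮ ⊓ W with hW'
      have hW'inv : ∀ x ∈ W', Θ x ∈ W' := by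
        intro x hx
        rw [hW', Submodule.mem_inf] at hx ⊢
        obtain ⟨hx1, hx2⟩ := hx
        refine ⟨?_, hW x hx2⟩
        rw [Submodule.mem_orthogonal] at hx1 ⊢
        intro u hu
        have h1 : u = -Θ (Θ u) := by rw [hsq, neg_neg]
        calc (inner ℂ u (Θ x) : ℂ) = inner ℂ (-Θ (Θ u)) (Θ x) := by rw [← h1]
          _ = -inner ℂ (Θ (Θ u)) (Θ x) := by rw [inner_neg_left]
          _ = -inner ℂ x (Θ u) := by rw [hinner]
          _ = -(starRingEnd ℂ) (inner ℂ (Θ u) x) := by rw [← inner_conj_symm]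
          _ = 0 := by rw [hx1 (Θ u) (hUinv u hu)]; simp
      have hsum : finrank ℂ U + finrank ℂ W' = finrank ℂ W :=
        Submodule.finrank_add_inf_finrank_orthogonal hUle
      rw [hUrank, hrank] at hsum
      have hlt : finrank ℂ W' < n := by omega
      have hev := ih _ hlt W' hW'inv rfl
      have : n = 2 + finrank ℂ W' := hsum.symm
      rw [this]
      exact (even_two).add hev

/-- If `Θ` is antiunitary with `Θ² = -Id` and commutes with a self-adjoint operator `H`
on a finite-dimensional complex inner product space, then every eigenspace of `H` has
even dimension (Kramers degeneracy). -/
theorem eigenspace_even_dimensional_of_time_reversal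
    {V : Type*} [NormedAddCommGroup V] [InnerProductSpace ℂ V] [FiniteDimensional ℂ V]
    (H : V →ₗ[ℂ] V) (hH : H.IsSymmetric)
    (Θ : V → V)
    (hadd : ∀ u v : V, Θ (u + v) = Θ u + Θ v)
    (hconj : ∀ (c : ℂ) (v : V), Θ (c • v) = (starRingEnd ℂ c) • Θ v)
    (hinner : ∀ u v : V, (inner ℂ (Θ u) (Θ v) : ℂ) = (inner ℂ v u : ℂ))
    (hsq : ∀ v : V, Θ (Θ v) = -v)
    (hcomm : ∀ v : V, Θ (H v) = H (Θ v)) :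
    ∀ E : ℝ, Even (Module.finrank ℂ (Module.End.eigenspace H (E : ℂ))) := by
  intro E
  refine even_finrank_of_theta_invariant Θ hadd hconj hinner hsq _
    (Module.End.eigenspace H (E : ℂ)) ?_ rfl
  intro v hv
  rw [Module.End.mem_eigenspace_iff] at hv ⊢
  rw [← hcomm, hv, hconj]
  simp [Complex.conj_ofReal]
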